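/- Let C_U := ∑_{j=1}^{n} |j⟩⟨j| ⊗ U_j be a controlled unitary on ℂ^n ⊗ ℂ^m, where {|j⟩} is an orthonormal basis of ℂ^n and each U_j is a unitary on ℂ^m, viewed as the bipartite channel ρ ↦ C_U ρ C_Uᴴ with A' = A = ℂ^n and B' = B = ℂ^m. Then the conditional channel min-entropy satisfies S_∞[A|B]_{C_U} ≥ −2 log n; moreover, if the unitaries are mutually orthogonal, i.e., tr(U_iᴴ U_j) = 0 for all i ≠ j, then equality holds: S_∞[A|B]_{C_U} = −2 log n. -/

import Mathlib

open scoped ComplexOrder Kronecker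
open Matrix

noncomputable section

/-- Square complex matrices indexed by `ι`. -/
abbrev Mat (ι : Type) : Type := Matrix ι ι ℂ

/-- A quantum state: a positive semidefinite matrix of trace one. -/
def IsState {ι : Type} [Fintype ι] (ρ : Mat ι) : Prop :=
  ρ.PosSemidef ∧ ρ.trace = 1

/-- Max-relative entropy `D_∞(ρ‖σ) = log₂ inf {λ ≥ 0 : λ•σ − ρ ⪰ 0}` as an extended real;
it is `+∞` (`sInf ∅ = ⊤`) when no such `λ` exists. -/
def Dmax {ι : Type} [Fintype ι] (ρ σ : Mat ι) : EReal :=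
  sInf {x : EReal | ∃ l : ℝ, 0 ≤ l ∧ ((l : ℂ) • σ - ρ).PosSemidef ∧
    x = ((Real.logb 2 l : ℝ) : EReal)}

/-- Partial trace over the first tensor factor. -/
def trFst {ιA ιB : Type} [Fintype ιA] (ρ : Matrix (ιA × ιB) (ιA × ιB) ℂ) : Mat ιB :=
  Matrix.of fun i j => ∑ k : ιA, ρ (k, i) (k, j)

/-- Partial trace over the second tensor factor. -/
def trSnd {ιA ιB : Type} [Fintype ιB] (ρ : Matrix (ιA × ιB) (ιA × ιB) ℂ) : Mat ιA :=
  Matrix.of fun i j => ∑ k : ιB, ρ (i, k) (j, k)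

/-- Conditional min-entropy `S_∞(A|B)_ρ := −inf over states σ on B of D_∞(ρ‖1_A⊗σ)`. -/
def condMin {ιA ιB : Type} [Fintype ιA] [DecidableEq ιA] [Fintype ιB]
    (ρ : Matrix (ιA × ιB) (ιA × ιB) ℂ) : EReal :=
  -(⨅ σ : {σ : Mat ιB // IsState σ}, Dmax ρ ((1 : Mat ιA) ⊗ₖ σ.1))

/-- `S↓_∞(A|B)_ρ := −D_∞(ρ‖1_A⊗ρ_B)` with `ρ_B = tr_A ρ`. -/
def condMinDown {ιA ιB : Type} [Fintype ιA] [DecidableEq ιA] [Fintype ιB]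
    (ρ : Matrix (ιA × ιB) (ιA × ιB) ℂ) : EReal :=
  -(Dmax ρ ((1 : Mat ιA) ⊗ₖ trFst ρ))

/-- The (unnormalized) Choi matrix of a linear map of matrices. -/
def choiMatrix {ι κ : Type} [DecidableEq ι] (L : Mat ι →ₗ[ℂ] Mat κ) :
    Matrix (ι × κ) (ι × κ) ℂ :=
  Matrix.of fun p q => L (Matrix.single p.1 q.1 1) p.2 q.2

/-- A quantum channel: a linear map that is completely positive (positive semidefinite Choi
matrix) and trace preserving. -/
def IsChannel {ι κ : Type} [Fintype ι] [DecidableEq ι] [Fintype κ]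
    (L : Mat ι →ₗ[ℂ] Mat κ) : Prop :=
  (choiMatrix L).PosSemidef ∧ ∀ X : Mat ι, (L X).trace = X.trace

/-- The Choi state `Φ^L = (id⊗L)(Φ_d)` of a linear map of matrices. -/
def choiState {ι κ : Type} [Fintype ι] [DecidableEq ι] (L : Mat ι →ₗ[ℂ] Mat κ) :
    Matrix (ι × κ) (ι × κ) ℂ :=
  ((Fintype.card ι : ℂ))⁻¹ • choiMatrix L

/-- The Choi state of a bipartite channel `N : A'B' → AB`, re-indexed across
the cut `R_A A : R_B B`. -/
def biChoiState {ιA' ιB' κA κB : Type} [Fintype ιA'] [DecidableEq ιA']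
    [Fintype ιB'] [DecidableEq ιB'] (N : Mat (ιA' × ιB') →ₗ[ℂ] Mat (κA × κB)) :
    Matrix ((ιA' × κA) × (ιB' × κB)) ((ιA' × κA) × (ιB' × κB)) ℂ :=
  Matrix.of fun p q =>
    choiState N ((p.1.1, p.2.1), (p.1.2, p.2.2)) ((q.1.1, q.2.1), (q.1.2, q.2.2))

/-- Conditional min-entropy of a bipartite channel:
`S_∞[A|B]_N := −inf over channels Q : B'→B of D_∞(Φ^N ‖ 1_{R_A A} ⊗ Φ^Q) − log₂|A'|`. -/
def chanCondMin {ιA' ιB' κA κB : Type}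
    [Fintype ιA'] [DecidableEq ιA'] [Fintype ιB'] [DecidableEq ιB']
    [Fintype κA] [DecidableEq κA] [Fintype κB] [DecidableEq κB]
    (N : Mat (ιA' × ιB') →ₗ[ℂ] Mat (κA × κB)) : EReal :=
  (-(⨅ Q : {Q : Mat ιB' →ₗ[ℂ] Mat κB // IsChannel Q},
      Dmax (biChoiState N) ((1 : Mat (ιA' × κA)) ⊗ₖ choiState Q.1)))
    - ((Real.logb 2 (Fintype.card ιA' : ℝ) : ℝ) : EReal)

/-- Rank-one projector `|v⟩⟨v|` associated with a vector. -/
def outer {ι : Type} (v : ι → ℂ) : Mat ι := Matrix.vecMulVec v (star v)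

/-- Vectorization `vec(V) := ∑ i, e_i ⊗ V e_i` of a matrix `V : ℂ^ι → ℂ^κ`. -/
def vecRect {ι κ : Type} (V : Matrix κ ι ℂ) : ι × κ → ℂ := fun p => V p.2 p.1

/-- A maximally entangled state on `ι1 × ι2`: `|φ⟩⟨φ|` with
`|φ⟩ = (1/√d) ∑ i, e_i ⊗ f_i` for orthonormal families `e`, `f`, `d = min(|ι1|,|ι2|)`. -/
def IsMaxEntangled {ι1 ι2 : Type} [Fintype ι1] [Fintype ι2]
    (Φ : Matrix (ι1 × ι2) (ι1 × ι2) ℂ) : Prop :=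
  ∃ (e : Fin (min (Fintype.card ι1) (Fintype.card ι2)) → ι1 → ℂ)
    (f : Fin (min (Fintype.card ι1) (Fintype.card ι2)) → ι2 → ℂ),
    (∀ i j, ∑ x : ι1, (starRingEnd ℂ) (e i x) * e j x = if i = j then 1 else 0) ∧
    (∀ i j, ∑ x : ι2, (starRingEnd ℂ) (f i x) * f j x = if i = j then 1 else 0) ∧
    Φ = outer (fun p => (((Real.sqrt (min (Fintype.card ι1) (Fintype.card ι2) : ℝ))⁻¹ : ℝ) : ℂ) *
      ∑ i, e i p.1 * f i p.2)

/-- Partial transpose over the second tensor factor. -/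
def ptransposeSnd {ιA ιB : Type} (ρ : Matrix (ιA × ιB) (ιA × ιB) ℂ) :
    Matrix (ιA × ιB) (ιA × ιB) ℂ :=
  Matrix.of fun p q => ρ (p.1, q.2) (q.1, p.2)

/-- A bipartite state is PPT if its partial transpose is positive semidefinite. -/
def IsPPT {ιA ιB : Type} [Fintype ιA] [Fintype ιB]
    (ρ : Matrix (ιA × ιB) (ιA × ιB) ℂ) : Prop :=
  (ptransposeSnd ρ).PosSemidef

/-- Conjugation channel `X ↦ W X Wᴴ`. -/
def conjMap {ι κ : Type} [Fintype ι] (W : Matrix κ ι ℂ) : Mat ι →ₗ[ℂ] Mat κ where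
  toFun X := W * X * Wᴴ
  map_add' X Y := by simp [Matrix.mul_add, Matrix.add_mul]
  map_smul' c X := by simp [Matrix.mul_smul, Matrix.smul_mul]

/-- The controlled unitary matrix `∑ j, |j⟩⟨j| ⊗ U_j`. -/
def ctrlU {n m : ℕ} (U : Fin n → Mat (Fin m)) : Mat (Fin n × Fin m) :=
  Matrix.of fun p q => (if p.1 = q.1 then 1 else 0) * U p.1 p.2 q.2

/-- The replacer channel `X ↦ tr(X) • γ`. -/
def replacer {ι κ : Type} [Fintype ι] (γ : Mat κ) : Mat ι →ₗ[ℂ] Mat κ where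
  toFun X := X.trace • γ
  map_add' X Y := by simp [Matrix.trace_add, add_smul]
  map_smul' c X := by simp [Matrix.trace_smul, smul_smul]

/-- The maximally mixed state `π_m = 1_m / m`. -/
def uniformState (m : ℕ) : Mat (Fin m) := ((m : ℂ))⁻¹ • (1 : Mat (Fin m))

/-- Tensor product of two linear maps of matrices. -/
def tensorL {ι1 κ1 ι2 κ2 : Type} [Fintype ι1] [DecidableEq ι1]
    (L1 : Mat ι1 →ₗ[ℂ] Mat κ1) (L2 : Mat ι2 →ₗ[ℂ] Mat κ2) :
    Mat (ι1 × ι2) →ₗ[ℂ] Mat (κ1 × κ2) where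
  toFun X := Matrix.of fun p q =>
    ∑ i1 : ι1, ∑ j1 : ι1,
      L1 (Matrix.single i1 j1 1) p.1 q.1 *
        L2 (Matrix.of fun i2 j2 => X (i1, i2) (j1, j2)) p.2 q.2
  map_add' X Y := by
    ext p q
    have h : ∀ i1 j1 : ι1,
        (Matrix.of fun i2 j2 => X (i1, i2) (j1, j2) + Y (i1, i2) (j1, j2)) =
          (Matrix.of fun i2 j2 => X (i1, i2) (j1, j2)) +
            (Matrix.of fun i2 j2 => Y (i1, i2) (j1, j2)) := by
      intro i1 j1; ext i2 j2; simp
    simp only [Matrix.add_apply, Matrix.of_apply, h, map_add, mul_add,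
      Finset.sum_add_distrib]
  map_smul' c X := by
    ext p q
    have h : ∀ i1 j1 : ι1,
        (Matrix.of fun i2 j2 => c * X (i1, i2) (j1, j2)) =
          c • (Matrix.of fun i2 j2 => X (i1, i2) (j1, j2)) := by
      intro i1 j1; ext i2 j2; simp
    simp only [Matrix.smul_apply, smul_eq_mul, Matrix.of_apply, RingHom.id_apply, h,
      LinearMap.map_smul]
    rw [Finset.mul_sum]
    refine Finset.sum_congr rfl fun i1 _ => ?_
    rw [Finset.mul_sum]
    refine Finset.sum_congr rfl fun j1 _ => ?_
    ring


/-- Square root of a positive semidefinite matrix (junk value `0` otherwise). -/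
def matSqrt {ι : Type} [Fintype ι] [DecidableEq ι] (M : Mat ι) : Mat ι :=
  letI := Classical.dec M.PosSemidef
  if h : M.PosSemidef then
    (h.1.eigenvectorUnitary : Mat ι) * diagonal ((↑) ∘ (Real.sqrt ·) ∘ h.1.eigenvalues) *
      (star h.1.eigenvectorUnitary : Mat ι)
  else 0

/-- Trace norm `‖X‖₁ = tr √(XᴴX)`. -/
def traceNorm {ι : Type} [Fintype ι] [DecidableEq ι] (X : Mat ι) : ℝ :=
  (matSqrt (Xᴴ * X)).trace.re

/-- Fidelity `F(ρ,σ) = ‖√ρ√σ‖₁²`. -/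
def fidelity {ι : Type} [Fintype ι] [DecidableEq ι] (ρ σ : Mat ι) : ℝ :=
  (traceNorm (matSqrt ρ * matSqrt σ)) ^ 2

/-- Purified distance `P(ρ,σ) = √(1 − F(ρ,σ))`. -/
def purifiedDist {ι : Type} [Fintype ι] [DecidableEq ι] (ρ σ : Mat ι) : ℝ :=
  Real.sqrt (1 - fidelity ρ σ)

/-- Purified channel distance `P[N,M] = sup over states ψ of P((id⊗N)ψ, (id⊗M)ψ)`. -/
def purifiedChannelDist {ι κ : Type} [Fintype ι] [DecidableEq ι] [Fintype κ] [DecidableEq κ]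
    (L1 L2 : Mat ι →ₗ[ℂ] Mat κ) : ℝ :=
  ⨆ ψ : {ψ : Matrix (ι × ι) (ι × ι) ℂ // IsState ψ},
    purifiedDist (tensorL (LinearMap.id : Mat ι →ₗ[ℂ] Mat ι) L1 ψ.1)
      (tensorL (LinearMap.id : Mat ι →ₗ[ℂ] Mat ι) L2 ψ.1)

/-- Diamond norm `‖L‖◊ = sup over states ρ on R⊗in (R ≃ in) of ‖(id⊗L)ρ‖₁`. -/
def diamondNorm {ι κ : Type} [Fintype ι] [DecidableEq ι] [Fintype κ] [DecidableEq κ]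
    (L : Mat ι →ₗ[ℂ] Mat κ) : ℝ :=
  ⨆ ρ : {ρ : Matrix (ι × ι) (ι × ι) ℂ // IsState ρ},
    traceNorm (tensorL (LinearMap.id : Mat ι →ₗ[ℂ] Mat ι) L ρ.1)

/-- `−log₂ t`, as an extended real which is `+∞` for `t ≤ 0`. -/
def negLogE (t : ℝ) : EReal := if t ≤ 0 then ⊤ else ((-Real.logb 2 t : ℝ) : EReal)

/-- Hypothesis-testing relative entropy
`D_H^ε(ρ‖σ) = −log₂ inf{tr(Λσ) : 0 ≤ Λ ≤ 1, tr(Λρ) ≥ 1−ε}`. -/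
def DH {ι : Type} [Fintype ι] [DecidableEq ι] (ε : ℝ) (ρ σ : Mat ι) : EReal :=
  negLogE (sInf {t : ℝ | ∃ Λ : Mat ι, Λ.PosSemidef ∧ ((1 : Mat ι) - Λ).PosSemidef ∧
    1 - ε ≤ ((Λ * ρ).trace).re ∧ t = ((Λ * σ).trace).re})

/-- Channel hypothesis-testing relative entropy
`D_H^ε[N‖M] = sup over states ψ of D_H^ε((id⊗N)ψ‖(id⊗M)ψ)`. -/
def DHchan {ι κ : Type} [Fintype ι] [DecidableEq ι] [Fintype κ] [DecidableEq κ]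
    (ε : ℝ) (L1 L2 : Mat ι →ₗ[ℂ] Mat κ) : EReal :=
  ⨆ ψ : {ψ : Matrix (ι × ι) (ι × ι) ℂ // IsState ψ},
    DH ε (tensorL (LinearMap.id : Mat ι →ₗ[ℂ] Mat ι) L1 ψ.1)
      (tensorL (LinearMap.id : Mat ι →ₗ[ℂ] Mat ι) L2 ψ.1)

/-- Channel max-relative entropy `D_∞[N‖M] = D_∞(Φ^N‖Φ^M)`. -/
def DmaxChan {ι κ : Type} [Fintype ι] [DecidableEq ι] [Fintype κ]
    (L1 L2 : Mat ι →ₗ[ℂ] Mat κ) : EReal :=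
  Dmax (choiState L1) (choiState L2)

/-- Smoothed channel max-relative entropy
`D_∞^ε[N‖M] = inf{D_∞[Ñ‖M] : Ñ a channel with (1/2)P[N,Ñ] ≤ ε}`. -/
def DmaxChanSmooth {ι κ : Type} [Fintype ι] [DecidableEq ι] [Fintype κ] [DecidableEq κ]
    (ε : ℝ) (L1 L2 : Mat ι →ₗ[ℂ] Mat κ) : EReal :=
  ⨅ Nt : {Nt : Mat ι →ₗ[ℂ] Mat κ //
      IsChannel Nt ∧ 2⁻¹ * purifiedChannelDist L1 Nt ≤ ε},
    DmaxChan Nt.1 L2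

/-- A quantum superchannel: `Θ(N) = post ∘ (id_E ⊗ N) ∘ pre` for channels `pre`, `post`
and a finite-dimensional memory `E`. -/
structure Superchannel (ι1 κ1 ι2 κ2 : Type) [Fintype ι1] [DecidableEq ι1]
    [Fintype κ1] [DecidableEq κ1] [Fintype ι2] [DecidableEq ι2]
    [Fintype κ2] [DecidableEq κ2] where
  e : ℕ
  pre : Mat ι2 →ₗ[ℂ] Mat (Fin e × ι1)
  post : Mat (Fin e × κ1) →ₗ[ℂ] Mat κ2
  pre_channel : IsChannel pre
  post_channel : IsChannel post

/-- Action of a superchannel on a linear map. -/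
def Superchannel.apply {ι1 κ1 ι2 κ2 : Type} [Fintype ι1] [DecidableEq ι1]
    [Fintype κ1] [DecidableEq κ1] [Fintype ι2] [DecidableEq ι2]
    [Fintype κ2] [DecidableEq κ2] (Θ : Superchannel ι1 κ1 ι2 κ2)
    (L : Mat ι1 →ₗ[ℂ] Mat κ1) : Mat ι2 →ₗ[ℂ] Mat κ2 :=
  Θ.post ∘ₗ (tensorL (LinearMap.id : Mat (Fin Θ.e) →ₗ[ℂ] Mat (Fin Θ.e)) L) ∘ₗ Θ.pre


/-- A conditional Gibbs-preserving superchannel (distillation direction): it maps every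
conditionally thermalizing channel `T^β ⊗ Q̃` to a conditionally uniformly mixing channel
`R^π_m ⊗ Q̃'` for some side channel `Q̃'`. -/
def IsCGPSdist {a' b' a b m d' d : ℕ} (γ : Mat (Fin a))
    (Θ : Superchannel (Fin a' × Fin b') (Fin a × Fin b) (Fin m × Fin d') (Fin m × Fin d)) :
    Prop :=
  ∀ Qt : Mat (Fin b') →ₗ[ℂ] Mat (Fin b), IsChannel Qt →
    ∃ Qt' : Mat (Fin d') →ₗ[ℂ] Mat (Fin d), IsChannel Qt' ∧
      Θ.apply (tensorL (replacer γ) Qt) = tensorL (replacer (uniformState m)) Qt'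

/-- A conditional Gibbs-preserving superchannel (formation direction): it maps every
conditionally uniformly mixing channel `R^π_m ⊗ Q̃` to a conditionally thermalizing channel
`T^β ⊗ Q̃'` for some side channel `Q̃'`. -/
def IsCGPScost {a' b' a b m d' d : ℕ} (γ : Mat (Fin a))
    (Θ : Superchannel (Fin m × Fin d') (Fin m × Fin d) (Fin a' × Fin b') (Fin a × Fin b)) :
    Prop :=
  ∀ Qt : Mat (Fin d') →ₗ[ℂ] Mat (Fin d), IsChannel Qt →
    ∃ Qt' : Mat (Fin b') →ₗ[ℂ] Mat (Fin b), IsChannel Qt' ∧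
      Θ.apply (tensorL (replacer (uniformState m)) Qt) = tensorL (replacer γ) Qt'

/-- One-shot conditional athermality distillation yield `Dist^{(1,ε)}(N, T^β)`:
the worst case over side channels `Q` of the largest `log₂ m` such that some conditional
Gibbs-preserving superchannel converts `(N, T^β⊗Q)` into `(id_m⊗Q', R^π_m⊗Q')`
within purified channel distance `ε`. -/
def DistOneShot {a' b' a b : ℕ} (N : Mat (Fin a' × Fin b') →ₗ[ℂ] Mat (Fin a × Fin b))
    (γ : Mat (Fin a)) (ε : ℝ) : EReal :=
  ⨅ Q : {Q : Mat (Fin b') →ₗ[ℂ] Mat (Fin b) // IsChannel Q},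
    sSup {x : EReal | ∃ m d' d : ℕ, ∃ Q' : Mat (Fin d') →ₗ[ℂ] Mat (Fin d),
      ∃ Θ : Superchannel (Fin a' × Fin b') (Fin a × Fin b) (Fin m × Fin d') (Fin m × Fin d),
        IsChannel Q' ∧ IsCGPSdist γ Θ ∧
        Θ.apply (tensorL (replacer γ) Q.1) = tensorL (replacer (uniformState m)) Q' ∧
        purifiedChannelDist
          (tensorL (LinearMap.id : Mat (Fin m) →ₗ[ℂ] Mat (Fin m)) Q') (Θ.apply N) ≤ ε ∧
        x = ((Real.logb 2 (m : ℝ) : ℝ) : EReal)}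

/-- One-shot conditional athermality formation cost `Cost^{(1,ε)}(N, T^β)`:
the best case over side channels `Q` of the least `log₂ m` such that some conditional
Gibbs-preserving superchannel converts `(id_m⊗Q'', R^π_m⊗Q'')` into `(N, T^β⊗Q)`
within purified channel distance `ε`. -/
def CostOneShot {a' b' a b : ℕ} (N : Mat (Fin a' × Fin b') →ₗ[ℂ] Mat (Fin a × Fin b))
    (γ : Mat (Fin a)) (ε : ℝ) : EReal :=
  ⨅ Q : {Q : Mat (Fin b') →ₗ[ℂ] Mat (Fin b) // IsChannel Q},
    sInf {x : EReal | ∃ m d' d : ℕ, ∃ Q'' : Mat (Fin d') →ₗ[ℂ] Mat (Fin d),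
      ∃ Θ : Superchannel (Fin m × Fin d') (Fin m × Fin d) (Fin a' × Fin b') (Fin a × Fin b),
        IsChannel Q'' ∧ IsCGPScost γ Θ ∧
        Θ.apply (tensorL (replacer (uniformState m)) Q'') = tensorL (replacer γ) Q.1 ∧
        purifiedChannelDist N
          (Θ.apply (tensorL (LinearMap.id : Mat (Fin m) →ₗ[ℂ] Mat (Fin m)) Q'')) ≤ ε ∧
        x = ((Real.logb 2 (m : ℝ) : ℝ) : EReal)}


/-- A bipartite channel `N : A'B' → AB` is no-signaling (semicausal) from `A'` to `B`:
`tr_A ∘ N = tr_{A'} ⊗ Q` for some channel `Q : B' → B`. -/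
def NoSignalFstToSnd {ιA' ιB' κA κB : Type} [Fintype ιA'] [DecidableEq ιA']
    [Fintype ιB'] [DecidableEq ιB'] [Fintype κA] [Fintype κB]
    (N : Mat (ιA' × ιB') →ₗ[ℂ] Mat (κA × κB)) : Prop :=
  ∃ Q : Mat ιB' →ₗ[ℂ] Mat κB, IsChannel Q ∧
    ∀ X : Mat (ιA' × ιB'), trFst (N X) = Q (trFst X)

end

/-!
The Choi state of `C_U` is the pure state `|w⟩⟨w| / (nm)` with
`w = ∑ j, |j j⟩ ⊗ vec U_j`. For the mixed-unitary side channel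
`Q = (1/n) ∑ j, U_j · U_jᴴ`, Cauchy–Schwarz and `|j j⟩⟨j j| ≤ 1` give
`|w⟩⟨w| ≤ n ∑ j, 1 ⊗ |vec U_j⟩⟨vec U_j| = n²m (1 ⊗ Φ^Q)`,
hence `D_∞ ≤ log n` and `S_∞[A|B] ≥ −2 log n`.
Conversely, if the `vec U_j` are orthogonal (each of squared norm `m`), testing
`Φ^{C_U} ≤ λ (1 ⊗ Φ^Q)` on `w` gives `nm ≤ λ ∑ j, ⟨vec U_j|Φ^Q|vec U_j⟩ ≤ λ m`
by Bessel's inequality, so `λ ≥ n` for every channel `Q`.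
-/

open scoped MatrixOrder

section PositiveSemidefinite

variable {ι κ : Type} [Fintype ι] [Fintype κ]

lemma posSemidef_outer (v : ι → ℂ) : (outer v).PosSemidef :=
  posSemidef_vecMulVec_self_star v

omit [Fintype ι] in
lemma outer_single_one [DecidableEq ι] (i : ι) : outer (Pi.single i 1) = Matrix.single i i 1 := by
  rw [outer, Pi.star_single, star_one, single_eq_single_vecMulVec_single]

lemma star_dotProduct_mulVec_eq_trace (A : Mat ι) (v : ι → ℂ) :
    star v ⬝ᵥ (A *ᵥ v) = (A * outer v).trace := by
  simp only [dotProduct, mulVec, trace, diag_apply, mul_apply, outer, vecMulVec_apply,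
    Pi.star_apply, Finset.mul_sum]
  exact Finset.sum_congr rfl fun i _ => Finset.sum_congr rfl fun j _ => by ring

lemma star_dotProduct_outer_mulVec (v : ι → ℂ) :
    star v ⬝ᵥ (outer v *ᵥ v) = (star v ⬝ᵥ v) ^ 2 := by
  rw [star_dotProduct_mulVec_eq_trace]
  unfold outer
  rw [vecMulVec_mul_vecMulVec, trace_vecMulVec, dotProduct_smul, smul_eq_mul, dotProduct_comm, sq]

lemma trace_mul_nonneg [DecidableEq ι] {A B : Mat ι} (hA : A.PosSemidef) (hB : B.PosSemidef) :
    0 ≤ (A * B).trace := by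
  obtain ⟨X, rfl⟩ := CStarAlgebra.nonneg_iff_eq_star_mul_self.mp hB.nonneg
  rw [← Matrix.mul_assoc, Matrix.trace_mul_comm, ← Matrix.mul_assoc]
  exact (hA.mul_mul_conjTranspose_same X).trace_nonneg

lemma star_dotProduct_mulVec_mono {A B : Mat ι} (hAB : A ≤ B) (x : ι → ℂ) :
    star x ⬝ᵥ (A *ᵥ x) ≤ star x ⬝ᵥ (B *ᵥ x) := by
  have := (Matrix.le_iff.mp hAB).dotProduct_mulVec_nonneg x
  rwa [sub_mulVec, dotProduct_sub, sub_nonneg] at this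

omit [Fintype ι] in
lemma smul_le_smul_of_complex_nonneg {A B : Mat ι} (hAB : A ≤ B) {c : ℂ} (hc : 0 ≤ c) :
    c • A ≤ c • B := by
  rw [Matrix.le_iff, ← smul_sub]
  exact (Matrix.le_iff.mp hAB).smul hc

omit [Fintype ι] [Fintype κ] in
lemma kronecker_sum {σ : Type} (A : Mat ι) (s : Finset σ) (B : σ → Mat κ) :
    A ⊗ₖ (∑ j ∈ s, B j) = ∑ j ∈ s, A ⊗ₖ B j :=
  map_sum (kroneckerBilinear (R := ℂ) A) B s

lemma kronecker_le_kronecker_right {A B : Mat ι} {C : Mat κ} (hAB : A ≤ B)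
    (hC : C.PosSemidef) : A ⊗ₖ C ≤ B ⊗ₖ C := by
  have h : B ⊗ₖ C - A ⊗ₖ C = (B - A) ⊗ₖ C := by
    ext p q
    simp [sub_mul]
  rw [Matrix.le_iff, h]
  exact (Matrix.le_iff.mp hAB).kronecker hC

omit [Fintype ι] in
lemma single_le_one [DecidableEq ι] (i : ι) : Matrix.single i i (1 : ℂ) ≤ 1 := by
  rw [Matrix.le_iff, ← Matrix.diagonal_single, ← Matrix.diagonal_one, Matrix.diagonal_sub]
  refine Matrix.PosSemidef.diagonal fun j => ?_
  by_cases h : j = i <;> simp [h]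

omit [Fintype ι] in
lemma sum_sum_outer_sub (f : κ → ι → ℂ) :
    ∑ i, ∑ j, outer (f i - f j) =
      (2 : ℂ) • ((Fintype.card κ : ℂ) • ∑ j, outer (f j) - outer (∑ j, f j)) := by
  ext a b
  simp only [outer, vecMulVec_apply, Matrix.sum_apply, Pi.sub_apply, Pi.star_apply, star_sub,
    Matrix.smul_apply, Matrix.sub_apply, Finset.sum_apply, star_sum, smul_eq_mul, sub_mul,
    mul_sub, Finset.sum_sub_distrib, Finset.sum_mul, Finset.mul_sum, Finset.sum_const,
    Finset.card_univ, nsmul_eq_mul]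
  rw [Finset.sum_comm (f := fun x y => f x a * star (f y b))]
  simp only [← Finset.mul_sum]
  ring

-- Cauchy–Schwarz for rank-one projectors.
lemma outer_sum_le_card_smul_sum_outer (f : κ → ι → ℂ) :
    outer (∑ j, f j) ≤ (Fintype.card κ : ℂ) • ∑ j, outer (f j) := by
  have h2 := sum_sum_outer_sub f ▸
    posSemidef_sum _ fun i _ => posSemidef_sum _ fun j _ => posSemidef_outer (f i - f j)
  rw [Matrix.le_iff]
  simpa [smul_smul] using h2.smul (a := (2 : ℂ)⁻¹) (by positivity)

lemma sum_outer_le_smul_one [DecidableEq ι] [DecidableEq κ] {v : κ → ι → ℂ} {c : ℝ}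
    (hc : 0 < c) (hv : ∀ i j, star (v i) ⬝ᵥ v j = if i = j then (c : ℂ) else 0) :
    ∑ j, outer (v j) ≤ (c : ℂ) • 1 := by
  set S := ∑ j, outer (v j)
  have hSS : S * S = (c : ℂ) • S := by
    simp only [S, Finset.sum_mul, Finset.mul_sum, outer, vecMulVec_mul_vecMulVec, hv, ite_smul,
      zero_smul, apply_ite (vecMulVec _), vecMulVec_zero, Finset.sum_ite_eq',
      Finset.mem_univ, if_true, vecMulVec_smul, Finset.smul_sum]
  -- `S² = c • S`, so `c • 1 - S` is `c⁻¹` times its own Gram matrix.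
  set M := (c : ℂ) • 1 - S
  have hM : Mᴴ = M := by
    simp [M, S, conjTranspose_sum, outer, conjTranspose_vecMulVec]
  have hMM : M * M = (c : ℂ) • M := by
    simp only [M, sub_mul, mul_sub, smul_mul_assoc, mul_smul_comm, Matrix.one_mul,
      Matrix.mul_one, hSS]
    module
  have : M = (c⁻¹ : ℂ) • (Mᴴ * M) := by
    rw [hM, hMM, smul_smul, inv_mul_cancel₀ (by exact_mod_cast hc.ne'), one_smul]
  show M.PosSemidef
  rw [this]
  exact (posSemidef_conjTranspose_mul_self M).smul (by positivity)

-- Bessel's inequality, weighted by a positive semidefinite matrix.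
lemma sum_star_dotProduct_mulVec_le [DecidableEq ι] [DecidableEq κ] {v : κ → ι → ℂ}
    {c : ℝ} (hc : 0 < c) (hv : ∀ i j, star (v i) ⬝ᵥ v j = if i = j then (c : ℂ) else 0)
    {A : Mat ι} (hA : A.PosSemidef) : ∑ j, star (v j) ⬝ᵥ (A *ᵥ v j) ≤ c * A.trace := by
  have h := trace_mul_nonneg hA (Matrix.le_iff.mp (sum_outer_le_smul_one hc hv))
  rw [Matrix.mul_sub, trace_sub, sub_nonneg, Matrix.mul_smul, Matrix.mul_one, trace_smul,
    Matrix.mul_sum, trace_sum] at h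
  simpa only [star_dotProduct_mulVec_eq_trace, smul_eq_mul] using h

end PositiveSemidefinite

section Choi

variable {ι κ : Type} [Fintype ι] [DecidableEq ι] [Fintype κ]

omit [Fintype κ] in
lemma choiMatrix_conjMap (W : Matrix κ ι ℂ) : choiMatrix (conjMap W) = outer (vec W) := by
  ext p q
  simp [choiMatrix, conjMap, outer, vecMulVec_apply, mul_apply, Matrix.single_apply, ite_and]

omit [Fintype ι] [Fintype κ] in
lemma choiMatrix_smul (c : ℂ) (L : Mat ι →ₗ[ℂ] Mat κ) :
    choiMatrix (c • L) = c • choiMatrix L := by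
  ext p q
  simp [choiMatrix]

omit [Fintype ι] [Fintype κ] in
lemma choiMatrix_sum {σ : Type} (s : Finset σ) (L : σ → Mat ι →ₗ[ℂ] Mat κ) :
    choiMatrix (∑ j ∈ s, L j) = ∑ j ∈ s, choiMatrix (L j) := by
  ext p q
  simp [choiMatrix, Matrix.sum_apply]

lemma isChannel_conjMap {W : Matrix κ ι ℂ} (hW : Wᴴ * W = 1) : IsChannel (conjMap W) := by
  refine ⟨choiMatrix_conjMap W ▸ posSemidef_outer _, fun X => ?_⟩
  simp [conjMap, Matrix.trace_mul_cycle, hW]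

lemma IsChannel.average {σ : Type} [Fintype σ] [Nonempty σ]
    {L : σ → Mat ι →ₗ[ℂ] Mat κ} (hL : ∀ j, IsChannel (L j)) :
    IsChannel ((Fintype.card σ : ℂ)⁻¹ • ∑ j, L j) := by
  refine ⟨?_, fun X => ?_⟩
  · rw [choiMatrix_smul, choiMatrix_sum]
    exact (posSemidef_sum _ fun j _ => (hL j).1).smul (by positivity)
  · simp [trace_sum, (hL _).2]

lemma IsChannel.posSemidef_choiState {L : Mat ι →ₗ[ℂ] Mat κ} (hL : IsChannel L) :
    (choiState L).PosSemidef :=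
  hL.1.smul (by positivity)

lemma IsChannel.trace_choiState [Nonempty ι] {L : Mat ι →ₗ[ℂ] Mat κ} (hL : IsChannel L) :
    (choiState L).trace = 1 := by
  have h i : ∑ k, L (Matrix.single i i 1) k k = 1 := by
    simpa [Matrix.trace] using hL.2 (Matrix.single i i 1)
  simp [choiState, choiMatrix, Matrix.trace, Fintype.sum_prod_type, ← Finset.mul_sum, h]

end Choi

lemma biChoiState_conjMap {ιA' ιB' κA κB : Type} [Fintype ιA'] [DecidableEq ιA']
    [Fintype ιB'] [DecidableEq ιB'] (W : Matrix (κA × κB) (ιA' × ιB') ℂ) :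
    biChoiState (conjMap W) =
      (Fintype.card (ιA' × ιB') : ℂ)⁻¹ •
        outer fun p => W (p.1.2, p.2.2) (p.1.1, p.2.1) := by
  ext p q
  simp [biChoiState, choiState, choiMatrix_conjMap, outer, vecMulVec_apply]

section MaxRelativeEntropy

variable {ι : Type} [Fintype ι]

lemma Dmax_le_logb {ρ σ : Mat ι} {l : ℝ} (hl : 0 ≤ l) (h : ρ ≤ (l : ℂ) • σ) :
    Dmax ρ σ ≤ (Real.logb 2 l : EReal) :=
  sInf_le ⟨l, hl, h, rfl⟩

lemma logb_le_Dmax {ρ σ : Mat ι} {c : ℝ} (hc : 0 < c)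
    (h : ∀ l : ℝ, 0 ≤ l → ρ ≤ (l : ℂ) • σ → c ≤ l) :
    (Real.logb 2 c : EReal) ≤ Dmax ρ σ := by
  refine le_sInf ?_
  rintro _ ⟨l, hl, hρσ, rfl⟩
  exact EReal.coe_le_coe_iff.mpr (Real.logb_le_logb_of_le one_lt_two hc (h l hl hρσ))

end MaxRelativeEntropy

section ChannelConditionalMinEntropy

variable {ιA' ιB' κA κB : Type} [Fintype ιA'] [DecidableEq ιA'] [Fintype ιB']
  [DecidableEq ιB'] [Fintype κA] [DecidableEq κA] [Fintype κB] [DecidableEq κB]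

lemma le_chanCondMin {N : Mat (ιA' × ιB') →ₗ[ℂ] Mat (κA × κB)}
    {Q : Mat ιB' →ₗ[ℂ] Mat κB}    (hQ : IsChannel Q) {l : ℝ} (hl : 0 ≤ l)
    (h : biChoiState N ≤ (l : ℂ) • ((1 : Mat (ιA' × κA)) ⊗ₖ choiState Q)) :
    ((-Real.logb 2 l - Real.logb 2 (Fintype.card ιA') : ℝ) : EReal) ≤ chanCondMin N := by
  rw [chanCondMin, EReal.coe_sub, EReal.coe_neg]
  exact EReal.sub_le_sub
    (EReal.neg_le_neg_iff.mpr (iInf_le_of_le ⟨Q, hQ⟩ (Dmax_le_logb hl h))) le_rfl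

lemma chanCondMin_le {N : Mat (ιA' × ιB') →ₗ[ℂ] Mat (κA × κB)} {c : ℝ} (hc : 0 < c)
    (h : ∀ Q : Mat ιB' →ₗ[ℂ] Mat κB, IsChannel Q → ∀ l : ℝ, 0 ≤ l →
      biChoiState N ≤ (l : ℂ) • ((1 : Mat (ιA' × κA)) ⊗ₖ choiState Q) → c ≤ l) :
    chanCondMin N ≤ ((-Real.logb 2 c - Real.logb 2 (Fintype.card ιA') : ℝ) : EReal) := by
  rw [chanCondMin, EReal.coe_sub, EReal.coe_neg]
  exact EReal.sub_le_sub (EReal.neg_le_neg_iff.mpr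
    (le_iInf fun Q => logb_le_Dmax hc (h Q.1 Q.2))) le_rfl

end ChannelConditionalMinEntropy

section TensorVec

variable {ι κ σ : Type} [Fintype ι] [Fintype κ]

def tensorVec (x : ι → ℂ) (y : κ → ℂ) : ι × κ → ℂ := fun p => x p.1 * y p.2

omit [Fintype ι] [Fintype κ] in
lemma outer_tensorVec (x : ι → ℂ) (y : κ → ℂ) :
    outer (tensorVec x y) = outer x ⊗ₖ outer y := by
  ext p q
  simp only [outer, tensorVec, vecMulVec_apply, Pi.star_apply, star_mul', kroneckerMap_apply]
  ring

omit [Fintype ι] [Fintype κ] in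
lemma star_tensorVec (x : ι → ℂ) (y : κ → ℂ) :
    star (tensorVec x y) = tensorVec (star x) (star y) := by
  ext p
  simp [tensorVec]

lemma kronecker_mulVec_tensorVec (A : Mat ι) (B : Mat κ) (x : ι → ℂ) (y : κ → ℂ) :
    (A ⊗ₖ B) *ᵥ tensorVec x y = tensorVec (A *ᵥ x) (B *ᵥ y) := by
  ext p
  simp only [tensorVec, mulVec, dotProduct, kroneckerMap_apply, Fintype.sum_prod_type,
    Finset.sum_mul_sum]
  exact Finset.sum_congr rfl fun i _ => Finset.sum_congr rfl fun k _ => by ring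

lemma tensorVec_dotProduct_tensorVec (x x' : ι → ℂ) (y y' : κ → ℂ) :
    tensorVec x y ⬝ᵥ tensorVec x' y' = (x ⬝ᵥ x') * (y ⬝ᵥ y') := by
  simp only [tensorVec, dotProduct, Fintype.sum_prod_type, Finset.sum_mul_sum]
  exact Finset.sum_congr rfl fun i _ => Finset.sum_congr rfl fun k _ => by ring

lemma star_sum_tensorVec_dotProduct_one_kronecker_mulVec [Fintype σ] [DecidableEq σ]
    [DecidableEq ι] {e : σ → ι → ℂ}
    (he : ∀ i j, star (e i) ⬝ᵥ e j = if i = j then 1 else 0) (v : σ → κ → ℂ)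
    (A : Mat κ) :
    star (∑ j, tensorVec (e j) (v j)) ⬝ᵥ
        (((1 : Mat ι) ⊗ₖ A) *ᵥ ∑ j, tensorVec (e j) (v j)) =
      ∑ j, star (v j) ⬝ᵥ (A *ᵥ v j) := by
  simp only [star_sum, mulVec_sum, sum_dotProduct, dotProduct_sum, star_tensorVec,
    kronecker_mulVec_tensorVec, one_mulVec, tensorVec_dotProduct_tensorVec, he, ite_mul, one_mul,
    zero_mul, Finset.sum_ite_eq', Finset.mem_univ, if_true]

end TensorVec

section MixedUnitary

variable {σ ι : Type} [Fintype σ] [Fintype ι] [DecidableEq ι]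

noncomputable def mixedUnitary (U : σ → Mat ι) : Mat ι →ₗ[ℂ] Mat ι :=
  (Fintype.card σ : ℂ)⁻¹ • ∑ j, conjMap (U j)

lemma isChannel_mixedUnitary [Nonempty σ] {U : σ → Mat ι}
    (hU : ∀ j, U j ∈ unitaryGroup ι ℂ) : IsChannel (mixedUnitary U) :=
  IsChannel.average fun j => isChannel_conjMap (Unitary.star_mul_self_of_mem (hU j))

lemma choiState_mixedUnitary (U : σ → Mat ι) :
    choiState (mixedUnitary U) =
      ((Fintype.card σ : ℂ) * Fintype.card ι)⁻¹ • ∑ j, outer (vec (U j)) := by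
  rw [choiState, mixedUnitary, choiMatrix_smul, choiMatrix_sum, smul_smul, mul_inv, mul_comm]
  simp only [choiMatrix_conjMap]

end MixedUnitary

section ControlledUnitary

variable {n m : ℕ}

/-- `∑ j, |j j⟩ ⊗ vec U_j`: the vectorization of `ctrlU U`, arranged across the cut
`R_A A : R_B B` as in `biChoiState`. -/
def ctrlVec (U : Fin n → Mat (Fin m)) : (Fin n × Fin n) × (Fin m × Fin m) → ℂ :=
  ∑ j, tensorVec (Pi.single (j, j) 1) (vec (U j))

lemma biChoiState_conjMap_ctrlU (U : Fin n → Mat (Fin m)) :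
    biChoiState (conjMap (ctrlU U)) = ((n : ℂ) * m)⁻¹ • outer (ctrlVec U) := by
  rw [biChoiState_conjMap]
  congr
  · simp
  · ext ⟨⟨a, b⟩, r, s⟩
    rcases eq_or_ne a b with rfl | h
    · simp [ctrlVec, ctrlU, tensorVec, Finset.sum_apply, Pi.single_apply]
    · simp only [ctrlVec, ctrlU, tensorVec, Finset.sum_apply, Pi.single_apply]
      simp [h.symm, ite_and]

lemma star_ctrlVec_dotProduct_one_kronecker_mulVec (U : Fin n → Mat (Fin m))
    (A : Mat (Fin m × Fin m)) :
    star (ctrlVec U) ⬝ᵥ (((1 : Mat (Fin n × Fin n)) ⊗ₖ A) *ᵥ ctrlVec U) =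
      ∑ j, star (vec (U j)) ⬝ᵥ (A *ᵥ vec (U j)) := by
  refine star_sum_tensorVec_dotProduct_one_kronecker_mulVec (fun i j => ?_) _ A
  simp [Pi.star_single, Pi.single_apply, eq_comm]

lemma biChoiState_conjMap_ctrlU_le (U : Fin n → Mat (Fin m)) :
    biChoiState (conjMap (ctrlU U)) ≤
      ((n : ℝ) : ℂ) • ((1 : Mat (Fin n × Fin n)) ⊗ₖ choiState (mixedUnitary U)) := by
  have key : outer (ctrlVec U) ≤
      (n : ℂ) • ∑ j, (1 : Mat (Fin n × Fin n)) ⊗ₖ outer (vec (U j)) :=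
    calc outer (ctrlVec U)
        ≤ (n : ℂ) • ∑ j, outer (tensorVec (Pi.single (j, j) 1) (vec (U j))) := by
          simpa only [ctrlVec, Fintype.card_fin] using outer_sum_le_card_smul_sum_outer
            (fun j : Fin n => tensorVec (Pi.single (j, j) 1) (vec (U j)))
      _ = (n : ℂ) • ∑ j, Matrix.single (j, j) (j, j) 1 ⊗ₖ outer (vec (U j)) := by
          simp only [outer_tensorVec, outer_single_one]
      _ ≤ (n : ℂ) • ∑ j, (1 : Mat (Fin n × Fin n)) ⊗ₖ outer (vec (U j)) :=
          smul_le_smul_of_complex_nonneg (Finset.sum_le_sum fun j _ =>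
            kronecker_le_kronecker_right (single_le_one (j, j))
              (posSemidef_outer (vec (U j)))) (Nat.cast_nonneg n)
  have hσ : ((n : ℝ) : ℂ) • ((1 : Mat (Fin n × Fin n)) ⊗ₖ choiState (mixedUnitary U)) =
      ((n : ℂ) * m)⁻¹ •
        ((n : ℂ) • ∑ j, (1 : Mat (Fin n × Fin n)) ⊗ₖ outer (vec (U j))) := by
    rw [choiState_mixedUnitary, kronecker_smul, kronecker_sum, smul_smul, smul_smul,
      Fintype.card_fin, Fintype.card_fin, Complex.ofReal_natCast, mul_comm]
  rw [biChoiState_conjMap_ctrlU, hσ]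
  exact smul_le_smul_of_complex_nonneg key (by positivity)

lemma natCast_le_of_biChoiState_conjMap_ctrlU_le [NeZero m] {U : Fin n → Mat (Fin m)}
    (hU : ∀ j, U j ∈ unitaryGroup (Fin m) ℂ)
    (horth : ∀ i j, i ≠ j → ((U i)ᴴ * U j).trace = 0)
    {Q : Mat (Fin m) →ₗ[ℂ] Mat (Fin m)} (hQ : IsChannel Q) {l : ℝ} (hl : 0 ≤ l)
    (h : biChoiState (conjMap (ctrlU U)) ≤
      (l : ℂ) • ((1 : Mat (Fin n × Fin n)) ⊗ₖ choiState Q)) :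
    (n : ℝ) ≤ l := by
  have hv : ∀ i j,
      star (vec (U i)) ⬝ᵥ vec (U j) = if i = j then ((m : ℝ) : ℂ) else 0 := by
    intro i j
    rw [star_vec_dotProduct_vec]
    split_ifs with hij
    · have hUi : (U i)ᴴ * U i = 1 := Unitary.star_mul_self_of_mem (hU i)
      rw [← hij, hUi, trace_one, Fintype.card_fin, Complex.ofReal_natCast]
    · exact horth i j hij
  have hnorm : star (ctrlVec U) ⬝ᵥ ctrlVec U = (n : ℂ) * m := by
    simpa [one_kronecker_one, hv] using star_ctrlVec_dotProduct_one_kronecker_mulVec U 1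
  have hτ : ∑ j, star (vec (U j)) ⬝ᵥ (choiState Q *ᵥ vec (U j)) ≤ (m : ℂ) := by
    simpa [hQ.trace_choiState] using sum_star_dotProduct_mulVec_le
      (Nat.cast_pos.mpr (NeZero.pos m)) hv hQ.posSemidef_choiState
  have hquad := star_dotProduct_mulVec_mono h (ctrlVec U)
  rw [biChoiState_conjMap_ctrlU, smul_mulVec, dotProduct_smul, star_dotProduct_outer_mulVec,
    hnorm, smul_mulVec, dotProduct_smul, star_ctrlVec_dotProduct_one_kronecker_mulVec,
    smul_eq_mul, smul_eq_mul, sq, ← mul_assoc, inv_mul_mul_self] at hquad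
  have hnm : ((n * m : ℝ) : ℂ) ≤ ((l * m : ℝ) : ℂ) := by
    push_cast
    exact hquad.trans (mul_le_mul_of_nonneg_left hτ (by exact_mod_cast hl))
  exact le_of_mul_le_mul_right (Complex.real_le_real.mp hnm)
    (Nat.cast_pos.mpr (NeZero.pos m))

end ControlledUnitary

/-- For a controlled unitary `C_U = ∑ j, |j⟩⟨j| ⊗ U_j` on `ℂ^n ⊗ ℂ^m`
viewed as a bipartite channel, the conditional channel min-entropy satisfies
`S_∞[A|B]_{C_U} ≥ −2 log n`, with equality when the `U_j` are mutually orthogonal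
(`tr(U_iᴴ U_j) = 0` for `i ≠ j`). -/
theorem controlled_unitary_conditional_min_entropy_bound
    {n m : ℕ} [NeZero n] [NeZero m] (U : Fin n → Mat (Fin m))
    (hU : ∀ j, U j ∈ Matrix.unitaryGroup (Fin m) ℂ) :
    (((-(2 * Real.logb 2 (n : ℝ))) : ℝ) : EReal) ≤ chanCondMin (conjMap (ctrlU U)) ∧
    ((∀ i j, i ≠ j → ((U i)ᴴ * U j).trace = 0) →
      chanCondMin (conjMap (ctrlU U)) = (((-(2 * Real.logb 2 (n : ℝ))) : ℝ) : EReal)) := by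
  have hlog : -Real.logb 2 n - Real.logb 2 (Fintype.card (Fin n)) = -(2 * Real.logb 2 n) := by
    rw [Fintype.card_fin]
    ring
  have hlower :
      (((-(2 * Real.logb 2 (n : ℝ))) : ℝ) : EReal) ≤ chanCondMin (conjMap (ctrlU U)) :=
    hlog ▸ le_chanCondMin (isChannel_mixedUnitary hU) (Nat.cast_nonneg n)
      (biChoiState_conjMap_ctrlU_le U)
  refine ⟨hlower, fun horth => le_antisymm ?_ hlower⟩
  exact hlog ▸ chanCondMin_le (Nat.cast_pos.mpr (NeZero.pos n)) fun Q hQ l hl h =>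
    natCast_le_of_biChoiState_conjMap_ctrlU_le hU horth hQ hl h
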